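/- arXiv:1405.4613 — 7 statements merged into one kernel-verified Lean document; each statement's English description precedes it below -/
import Mathlib

section
/- Let G be a group acting by isometries on a bounded complete metric space (X,d). For a fixed point a ∈ X, the function P_a(y) = d(a,y) has norm-precompact G-orbit in C(X) (i.e. P_a is almost periodic) if and only if the closed orbit of a is compact. -/
open Filter Topology BoundedContinuousFunction

/-! The map `x ↦ dist x ·` is an isometric embedding of a bounded metric space `X` into
`X →ᵇ ℝ`, and it sends the orbit of `a` onto `{P g}`. An isometry out of a complete space is a
closed embedding, so it preserves closures and detects compactness. -/

section DistFunction

variable {X : Type*} [PseudoMetricSpace X] {C : ℝ}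

def distFunction (hC : ∀ x y : X, dist x y ≤ C) (x : X) : X →ᵇ ℝ :=
  mkOfBound ⟨dist x, continuous_const.dist continuous_id⟩ C fun y z => by
    simpa only [ContinuousMap.coe_mk, Real.dist_eq, dist_comm x] using
      (abs_dist_sub_le y z x).trans (hC y z)

@[simp]
theorem distFunction_apply (hC : ∀ x y : X, dist x y ≤ C) (x y : X) :
    distFunction hC x y = dist x y :=
  rfl

theorem isometry_distFunction (hC : ∀ x y : X, dist x y ≤ C) : Isometry (distFunction hC) := by
  refine Isometry.of_dist_eq fun x y => le_antisymm ?_ ?_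
  · refine (dist_le dist_nonneg).2 fun z => ?_
    simpa only [distFunction_apply, Real.dist_eq] using abs_dist_sub_le x y z
  · simpa [Real.dist_eq] using dist_coe_le_dist (f := distFunction hC x) (g := distFunction hC y) y

end DistFunction

theorem Isometry.isCompact_closure_image_iff {α β : Type*} [EMetricSpace α] [CompleteSpace α]
    [EMetricSpace β] {e : α → β} (he : Isometry e) (s : Set α) :
    IsCompact (closure (e '' s)) ↔ IsCompact (closure s) := by
  rw [he.isClosedEmbedding.closure_image_eq, he.isClosedEmbedding.isInducing.isCompact_iff]

theorem stmt4_general {G X : Type*} [Group G] [MetricSpace X] [CompleteSpace X] [MulAction G X]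
    (hbdd : ∃ C : ℝ, ∀ x y : X, dist x y ≤ C)
    (a : X) (P : G → (X →ᵇ ℝ)) (hP : ∀ (g : G) (y : X), P g y = dist (g • a) y) :
    IsCompact (closure (Set.range P)) ↔ IsCompact (closure (MulAction.orbit G a)) := by
  obtain ⟨C, hC⟩ := hbdd
  have hP_eq : P = distFunction hC ∘ fun g : G => g • a :=
    funext fun g => ext fun y => hP g y
  rw [hP_eq, Set.range_comp]
  exact (isometry_distFunction hC).isCompact_closure_image_iff _

theorem stmt4 {G X : Type*} [Group G] [MetricSpace X] [CompleteSpace X] [MulAction G X]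
    (hbdd : ∃ C : ℝ, ∀ x y : X, dist x y ≤ C)
    (hiso : ∀ (g : G) (x y : X), dist (g • x) (g • y) = dist x y)
    (a : X) (P : G → (X →ᵇ ℝ)) (hP : ∀ (g : G) (y : X), P g y = dist (g • a) y) :
    IsCompact (closure (Set.range P)) ↔ IsCompact (closure (MulAction.orbit G a)) :=
  stmt4_general hbdd a P hP
end

section
/- Let G act by isometries on a complete bounded metric space X such that the metric quotient X⫽G (the space of closed orbits with the induced infimum metric) is compact. If every function in RUC_u(X) is almost periodic, then X is compact. Conversely, if X is compact then every continuous function on X is almost periodic. -/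
open Filter Topology BoundedContinuousFunction

/-! `x ↦ min (dist x a) 1` is a uniformly continuous, right uniformly continuous function whose
translates are the functions `x ↦ min (dist x (g • a)) 1`. Since `a ↦ min (dist · a) 1` is a uniform
embedding of `X` into `X →ᵇ ℝ`, almost periodicity of this function makes the orbit of `a` totally
bounded. Compactness of `X⫽G` says that `X` lies within every `ε` of finitely many orbits, so `X`
is totally bounded, hence compact. Conversely, if `X` is compact, the translates of a continuous
function form a uniformly equicontinuous and uniformly bounded family, and Arzelà–Ascoli applies. -/

namespace Metric

variable {α : Type*} [PseudoMetricSpace α]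

theorem totallyBounded_of_forall_subset_thickening {s : Set α}
    (h : ∀ ε > 0, ∃ t, TotallyBounded t ∧ s ⊆ thickening ε t) : TotallyBounded s := by
  refine totallyBounded_iff.2 fun ε hε => ?_
  obtain ⟨t, ht, hst⟩ := h (ε / 2) (half_pos hε)
  obtain ⟨u, hu, htu⟩ := totallyBounded_iff.1 ht (ε / 2) (half_pos hε)
  refine ⟨u, hu, ?_⟩
  rw [← thickening_eq_biUnion_ball] at htu ⊢
  calc s ⊆ thickening (ε / 2) t := hst
    _ ⊆ thickening (ε / 2) (thickening (ε / 2) u) := thickening_subset_of_subset _ htu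
    _ ⊆ thickening (ε / 2 + ε / 2) u := thickening_thickening_subset _ _ _
    _ = thickening ε u := by rw [add_halves]

end Metric

namespace BoundedContinuousFunction

variable {X : Type*} [PseudoMetricSpace X]

noncomputable def truncatedDist (a : X) : X →ᵇ ℝ :=
  mkOfBound ⟨fun x => min (dist x a) 1, by fun_prop⟩ 1 fun x y =>
    Real.dist_le_of_mem_Icc_01 ⟨le_min dist_nonneg zero_le_one, min_le_right _ _⟩
      ⟨le_min dist_nonneg zero_le_one, min_le_right _ _⟩

@[simp]
theorem truncatedDist_apply (a x : X) : truncatedDist a x = min (dist x a) 1 := rfl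

theorem lipschitzWith_truncatedDist_apply (a : X) : LipschitzWith 1 (truncatedDist a) :=
  (LipschitzWith.dist_left a).min_const 1

theorem lipschitzWith_truncatedDist : LipschitzWith 1 (truncatedDist : X → X →ᵇ ℝ) :=
  LipschitzWith.of_dist_le_mul fun a b => by
    simpa using (dist_le dist_nonneg).2 fun x => by
      simpa using ((LipschitzWith.dist_right x).min_const 1).dist_le_mul a b

theorem min_dist_le_dist_truncatedDist (a b : X) :
    min (dist a b) 1 ≤ dist (truncatedDist a) (truncatedDist b) :=
  calc min (dist a b) 1 = dist (truncatedDist a a) (truncatedDist b a) := by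
        simp [Real.dist_eq, dist_comm a b, abs_of_nonneg]
    _ ≤ _ := dist_coe_le_dist a

theorem isUniformInducing_truncatedDist : IsUniformInducing (truncatedDist : X → X →ᵇ ℝ) := by
  refine Metric.isUniformInducing_iff.2
    ⟨lipschitzWith_truncatedDist.uniformContinuous, fun δ hδ => ⟨min δ 1, lt_min hδ one_pos, ?_⟩⟩
  intro a b hab
  by_contra! hba
  exact (min_le_min_right 1 hba).not_gt ((min_dist_le_dist_truncatedDist a b).trans_lt hab)

end BoundedContinuousFunction

section IsometricAction

open MulAction

variable {G X : Type*} [Group G] [MetricSpace X] [MulAction G X]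

variable (G) in
def translates {β : Type*} [PseudoMetricSpace β] (f : X →ᵇ β) : Set (X →ᵇ β) :=
  {h | ∃ g : G, ∀ x, h x = f (g⁻¹ • x)}

variable (G) in
def IsRightUniformlyContinuous [TopologicalSpace G] (f : X →ᵇ ℝ) : Prop :=
  ∀ ε > 0, ∃ U ∈ 𝓝 (1 : G), ∀ g ∈ U, ∀ x, |f (g⁻¹ • x) - f x| < ε

theorem compactSpace_of_forall_totallyBounded_orbit [CompleteSpace X]
    (hquot : ∀ ε > (0 : ℝ), ∃ F : Finset X, ∀ x : X, ∃ a ∈ F, ∃ g : G, dist (g • a) x < ε)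
    (horbit : ∀ a : X, TotallyBounded (orbit G a)) : CompactSpace X := by
  refine isCompact_univ_iff.1 (TotallyBounded.isCompact_of_isClosed ?_ isClosed_univ)
  refine Metric.totallyBounded_of_forall_subset_thickening fun ε hε => ?_
  obtain ⟨F, hF⟩ := hquot ε hε
  refine ⟨⋃ a ∈ (F : Set X), orbit G a,
    (totallyBounded_biUnion F.finite_toSet).2 fun a _ => horbit a, fun x _ => ?_⟩
  obtain ⟨a, ha, g, hg⟩ := hF x
  exact Metric.mem_thickening_iff.2 ⟨g • a, Set.mem_biUnion ha ⟨g, rfl⟩, by rwa [dist_comm]⟩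

variable [IsIsometricSMul G X]

theorem truncatedDist_inv_smul (g : G) (a x : X) :
    truncatedDist a (g⁻¹ • x) = truncatedDist (g • a) x := by
  rw [truncatedDist_apply, truncatedDist_apply, ← dist_smul g, smul_inv_smul]

theorem translates_truncatedDist (a : X) :
    translates G (truncatedDist a) = Set.range fun g : G => truncatedDist (g • a) := by
  ext h
  simp only [translates, truncatedDist_inv_smul, Set.mem_ofPred_eq, Set.mem_range,
    BoundedContinuousFunction.ext_iff, eq_comm]

theorem isRightUniformlyContinuous_truncatedDist [TopologicalSpace G] [ContinuousSMul G X]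
    (a : X) : IsRightUniformlyContinuous G (truncatedDist a) := by
  intro ε hε
  refine ⟨(· • a) ⁻¹' Metric.ball a ε,
    (continuous_id.smul continuous_const).tendsto' 1 a (one_smul G a) (Metric.ball_mem_nhds a hε),
    fun g hg x => ?_⟩
  calc |truncatedDist a (g⁻¹ • x) - truncatedDist a x|
      = dist (truncatedDist (g • a) x) (truncatedDist a x) := by
        rw [truncatedDist_inv_smul, Real.dist_eq]
    _ ≤ dist (truncatedDist (g • a)) (truncatedDist a) := dist_coe_le_dist x
    _ ≤ dist (g • a) a := by simpa using lipschitzWith_truncatedDist.dist_le_mul (g • a) a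
    _ < ε := hg

theorem totallyBounded_orbit_of_totallyBounded_translates (a : X)
    (h : TotallyBounded (translates G (truncatedDist a))) : TotallyBounded (orbit G a) := by
  rw [translates_truncatedDist] at h
  refine (totallyBounded_preimage isUniformInducing_truncatedDist h).subset ?_
  rintro _ ⟨g, rfl⟩
  exact ⟨g, rfl⟩

theorem totallyBounded_translates [CompactSpace X] {β : Type*} [MetricSpace β] [ProperSpace β]
    (f : X →ᵇ β) : TotallyBounded (translates G f) := by
  refine (arzela_ascoli _ f.isBounded_range.isCompact_closure (translates G f) ?_ ?_)
    |>.totallyBounded.subset subset_closure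
  · rintro h x ⟨g, hg⟩
    rw [hg]
    exact subset_closure ⟨_, rfl⟩
  · refine UniformEquicontinuous.equicontinuous (Metric.uniformEquicontinuous_iff.2 ?_)
    intro ε hε
    obtain ⟨δ, hδ, hf⟩ := Metric.uniformContinuous_iff.1
      (CompactSpace.uniformContinuous_of_continuous f.continuous) ε hε
    refine ⟨δ, hδ, fun x y hxy ⟨h, g, hg⟩ => ?_⟩
    simp only [hg]
    exact hf (by rwa [dist_smul])

end IsometricAction

theorem stmt5_general {G X : Type*} [Group G] [TopologicalSpace G]
    [MetricSpace X] [CompleteSpace X] [MulAction G X] [ContinuousSMul G X]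
    (hiso : ∀ (g : G) (x y : X), dist (g • x) (g • y) = dist x y)
    (hquot : ∀ ε > (0 : ℝ), ∃ F : Finset X, ∀ x : X, ∃ a ∈ F, ∃ g : G, dist (g • a) x < ε) :
    ((∀ f : X →ᵇ ℝ, UniformContinuous f →
        (∀ ε > (0 : ℝ), ∃ U ∈ 𝓝 (1 : G), ∀ g ∈ U, ∀ x : X, |f (g⁻¹ • x) - f x| < ε) →
        TotallyBounded {h : X →ᵇ ℝ | ∃ g : G, ∀ x, h x = f (g⁻¹ • x)}) →
      CompactSpace X) ∧
    (CompactSpace X →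
      ∀ f : X →ᵇ ℝ, TotallyBounded {h : X →ᵇ ℝ | ∃ g : G, ∀ x, h x = f (g⁻¹ • x)}) := by
  have : IsIsometricSMul G X := ⟨fun g => Isometry.of_dist_eq (hiso g)⟩
  refine ⟨fun hAP => compactSpace_of_forall_totallyBounded_orbit hquot fun a => ?_,
    fun _ f => totallyBounded_translates f⟩
  exact totallyBounded_orbit_of_totallyBounded_translates a
    (hAP _ (lipschitzWith_truncatedDist_apply a).uniformContinuous
      (isRightUniformlyContinuous_truncatedDist a))

theorem stmt5 {G X : Type*} [Group G] [TopologicalSpace G] [IsTopologicalGroup G]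
    [MetricSpace X] [CompleteSpace X] [MulAction G X] [ContinuousSMul G X]
    (hbdd : ∃ C : ℝ, ∀ x y : X, dist x y ≤ C)
    (hiso : ∀ (g : G) (x y : X), dist (g • x) (g • y) = dist x y)
    (hquot : ∀ ε > (0 : ℝ), ∃ F : Finset X, ∀ x : X, ∃ a ∈ F, ∃ g : G, dist (g • a) x < ε) :
    ((∀ f : X →ᵇ ℝ, UniformContinuous f →
        (∀ ε > (0 : ℝ), ∃ U ∈ 𝓝 (1 : G), ∀ g ∈ U, ∀ x : X, |f (g⁻¹ • x) - f x| < ε) →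
        TotallyBounded {h : X →ᵇ ℝ | ∃ g : G, ∀ x, h x = f (g⁻¹ • x)}) →
      CompactSpace X) ∧
    (CompactSpace X →
      ∀ f : X →ᵇ ℝ, TotallyBounded {h : X →ᵇ ℝ | ∃ g : G, ∀ x, h x = f (g⁻¹ • x)}) :=
  stmt5_general hiso hquot
end

section
/- Let f : A × B → ℝ be a bounded function with the order property on A × B: there exist ε > 0 and sequences (a_k) in A, (b_l) in B with |f(a_k,b_l) − f(a_l,b_k)| ≥ ε for k < l. Then, after passing to subsequences, there exist real numbers r ≠ s with lim_k lim_l f(a_k, b_l) = r and lim_k lim_l f(a_l, b_k) = s. -/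
open Filter Topology

theorem stmt7 {A B : Type*} (f : A → B → ℝ) (C : ℝ) (hbdd : ∀ (a : A) (b : B), |f a b| ≤ C)
    (a : ℕ → A) (b : ℕ → B) (ε : ℝ) (hε : 0 < ε)
    (h : ∀ k l : ℕ, k < l → ε ≤ |f (a k) (b l) - f (a l) (b k)|) :
    ∃ φ : ℕ → ℕ, StrictMono φ ∧ ∃ r s : ℝ, r ≠ s ∧
      (∃ u : ℕ → ℝ, (∀ k, Tendsto (fun l => f (a (φ k)) (b (φ l))) atTop (𝓝 (u k))) ∧
        Tendsto u atTop (𝓝 r)) ∧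
      (∃ v : ℕ → ℝ, (∀ k, Tendsto (fun l => f (a (φ l)) (b (φ k))) atTop (𝓝 (v k))) ∧
        Tendsto v atTop (𝓝 s)) := by
  classical
  set x : ℕ → ℕ → ℝ × ℝ := fun l k => (f (a k) (b l), f (a l) (b k)) with hxdef
  have hmem : ∀ l, x l ∈ Set.univ.pi (fun _ : ℕ => Set.Icc (-C) C ×ˢ Set.Icc (-C) C) := by
    intro l k _
    exact ⟨abs_le.mp (hbdd _ _), abs_le.mp (hbdd _ _)⟩
  have hcomp : IsCompact (Set.univ.pi fun _ : ℕ => Set.Icc (-C) C ×ˢ Set.Icc (-C) C) :=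
    isCompact_univ_pi fun _ => isCompact_Icc.prod isCompact_Icc
  obtain ⟨F, hFmem, ψ, hψ, hF⟩ := hcomp.tendsto_subseq hmem
  have hFk : ∀ k, Tendsto (fun l => x (ψ l) k) atTop (𝓝 (F k)) := fun k =>
    tendsto_pi_nhds.1 hF k
  have h1 : ∀ k, Tendsto (fun l => f (a k) (b (ψ l))) atTop (𝓝 (F k).1) := fun k =>
    (continuous_fst.tendsto _).comp (hFk k)
  have h2 : ∀ k, Tendsto (fun l => f (a (ψ l)) (b k)) atTop (𝓝 (F k).2) := fun k =>
    (continuous_snd.tendsto _).comp (hFk k)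
  -- second extraction
  set w : ℕ → ℝ × ℝ := fun k => F (ψ k) with hwdef
  have hwmem : ∀ k, w k ∈ Set.Icc (-C) C ×ˢ Set.Icc (-C) C := fun k => hFmem (ψ k) trivial
  obtain ⟨p, -, θ, hθ, hp⟩ := (isCompact_Icc.prod isCompact_Icc).tendsto_subseq hwmem
  refine ⟨ψ ∘ θ, hψ.comp hθ, p.1, p.2, ?_, ?_, ?_⟩
  · -- p.1 ≠ p.2
    have hu : ∀ k, Tendsto (fun l => f (a ((ψ ∘ θ) k)) (b ((ψ ∘ θ) l))) atTop
        (𝓝 (F (ψ (θ k))).1) := fun k => (h1 (ψ (θ k))).comp hθ.tendsto_atTop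
    have hv : ∀ k, Tendsto (fun l => f (a ((ψ ∘ θ) l)) (b ((ψ ∘ θ) k))) atTop
        (𝓝 (F (ψ (θ k))).2) := fun k => (h2 (ψ (θ k))).comp hθ.tendsto_atTop
    have hd : ∀ k, ε ≤ |(F (ψ (θ k))).1 - (F (ψ (θ k))).2| := by
      intro k
      have hlim : Tendsto (fun l => |f (a ((ψ ∘ θ) k)) (b ((ψ ∘ θ) l)) -
          f (a ((ψ ∘ θ) l)) (b ((ψ ∘ θ) k))|) atTop
          (𝓝 |(F (ψ (θ k))).1 - (F (ψ (θ k))).2|) := ((hu k).sub (hv k)).abs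
      refine ge_of_tendsto hlim ?_
      filter_upwards [eventually_gt_atTop k] with l hl
      exact h _ _ ((hψ.comp hθ) hl)
    have hpu : Tendsto (fun k => (F (ψ (θ k))).1) atTop (𝓝 p.1) :=
      (continuous_fst.tendsto _).comp hp
    have hpv : Tendsto (fun k => (F (ψ (θ k))).2) atTop (𝓝 p.2) :=
      (continuous_snd.tendsto _).comp hp
    have hps : ε ≤ |p.1 - p.2| := by
      refine ge_of_tendsto (hpu.sub hpv).abs ?_
      filter_upwards with k using hd k
    intro hps'
    rw [hps', sub_self, abs_zero] at hps
    exact absurd hps (not_le.mpr hε)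
  · exact ⟨fun k => (F (ψ (θ k))).1,
      fun k => (h1 (ψ (θ k))).comp hθ.tendsto_atTop,
      (continuous_fst.tendsto _).comp hp⟩
  · exact ⟨fun k => (F (ψ (θ k))).2,
      fun k => (h2 (ψ (θ k))).comp hθ.tendsto_atTop,
      (continuous_snd.tendsto _).comp hp⟩
end

section
/- Symmetry of precompactness of sections: let A, B be sets and f : A × B → ℝ a bounded function. If the family {f(a,·) : a ∈ A} is totally bounded in ℓ∞(B) (sup-norm), then the family {f(·,b) : b ∈ B} is totally bounded in ℓ∞(A). -/
lemma floor_close {δ x y : ℝ} (hδ : 0 < δ) (hf : ⌊x / δ⌋ = ⌊y / δ⌋) : |x - y| < δ := by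
  have hx1 := Int.floor_le (x / δ)
  have hx2 := Int.lt_floor_add_one (x / δ)
  have hy1 := Int.floor_le (y / δ)
  have hy2 := Int.lt_floor_add_one (y / δ)
  rw [hf] at hx1 hx2
  rw [abs_sub_lt_iff]
  constructor
  · have h1 : (x - y) / δ < 1 := by rw [sub_div]; linarith
    calc x - y = (x - y) / δ * δ := by field_simp
    _ < 1 * δ := by exact mul_lt_mul_of_pos_right h1 hδ
    _ = δ := one_mul δ
  · have h1 : (y - x) / δ < 1 := by rw [sub_div]; linarith
    calc y - x = (y - x) / δ * δ := by field_simp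
    _ < 1 * δ := by exact mul_lt_mul_of_pos_right h1 hδ
    _ = δ := one_mul δ

theorem stmt9 {A B : Type*} (f : A → B → ℝ) (C : ℝ) (hbdd : ∀ (a : A) (b : B), |f a b| ≤ C)
    (h : ∀ ε > (0 : ℝ), ∃ F : Finset A, ∀ a : A, ∃ a' ∈ F, ∀ b : B, |f a b - f a' b| ≤ ε) :
    ∀ ε > (0 : ℝ), ∃ F : Finset B, ∀ b : B, ∃ b' ∈ F, ∀ a : A, |f a b - f a b'| ≤ ε := by
  classical
  intro ε hε
  obtain ⟨FA, hFA⟩ := h (ε / 4) (by linarith)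
  set δ : ℝ := ε / 2 with hδdef
  have hδ : 0 < δ := by positivity
  set p : B → ({a // a ∈ FA} → ℤ) := fun b a' => ⌊f a'.1 b / δ⌋ with hp
  -- range of p is finite
  have hsub : Set.range p ⊆ Set.pi Set.univ (fun _ : {a // a ∈ FA} =>
      Set.Icc (⌊(-C) / δ⌋) (⌊C / δ⌋)) := by
    rintro g ⟨b, rfl⟩ a' _
    constructor
    · apply Int.floor_le_floor
      gcongr
      have := abs_le.mp (hbdd a'.1 b); linarith [this.1]
    · apply Int.floor_le_floor
      gcongr
      exact (abs_le.mp (hbdd a'.1 b)).2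
  have hfin : (Set.range p).Finite :=
    Set.Finite.subset (Set.Finite.pi (fun _ => Set.finite_Icc _ _)) hsub
  -- choose representatives
  let T := hfin.toFinset
  let F : Finset B := T.attach.image (fun r =>
    ((hfin.mem_toFinset.mp r.2) : ∃ b, p b = r.1).choose)
  refine ⟨F, fun b => ?_⟩
  have hrb : p b ∈ Set.range p := ⟨b, rfl⟩
  have hrbT : p b ∈ T := hfin.mem_toFinset.mpr hrb
  set b' : B := ((hfin.mem_toFinset.mp hrbT) : ∃ c, p c = p b).choose with hb'
  have hpb' : p b' = p b := (hfin.mem_toFinset.mp hrbT).choose_spec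
  refine ⟨b', Finset.mem_image_of_mem _ (Finset.mem_attach _ ⟨p b, hrbT⟩), fun a => ?_⟩
  obtain ⟨a', ha'F, ha'⟩ := hFA a
  have hfloor : ⌊f a' b / δ⌋ = ⌊f a' b' / δ⌋ := by
    have := congrFun hpb' ⟨a', ha'F⟩
    simpa [hp] using this.symm
  have hmid : |f a' b - f a' b'| < δ := floor_close hδ hfloor
  have h1 := ha' b
  have h2 := ha' b'
  calc |f a b - f a b'| = |(f a b - f a' b) + (f a' b - f a' b') + (f a' b' - f a b')| := by
        ring_nf
    _ ≤ |f a b - f a' b| + |f a' b - f a' b'| + |f a' b' - f a b'| := by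
        exact (abs_add_three _ _ _)
    _ ≤ ε / 4 + δ + ε / 4 := by
        have h2' : |f a' b' - f a b'| ≤ ε / 4 := by rw [abs_sub_comm]; exact h2
        linarith [hmid.le]
    _ ≤ ε := by rw [hδdef]; linarith
end

section
/- Let Y be a compact Hausdorff G-space and h ∈ C(Y). If the orbit G·h is a fragmented family (for every nonempty B ⊆ Y and ε > 0 there is an open set O with B ∩ O ≠ ∅ and |h(gy) − h(gy')| < ε for all g ∈ G and y, y' ∈ B ∩ O), then h is strongly uniformly continuous with respect to the point y when restricted to orbits: for every y ∈ Y and ε > 0 there is a neighborhood U of the identity of G such that |h(gy) − h(guy)| < ε for all g ∈ G and u ∈ U. -/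
open Filter Topology

/-!
Fragmentation applied to the orbit `B = G • y` yields an open set `O` meeting the orbit in a
point `g₀ • y` such that all translates of `h` oscillate by less than `ε` on `G • y ∩ O`. By
continuity of the action, `g₀ • u • y` stays in `O` for `u` near `1`; translating by `g * g₀⁻¹`
turns the pair `g₀ • y`, `g₀ • u • y` into `g • y`, `g • u • y`.
-/

theorem setOf_smul_smul_mem_mem_nhds_one {G Y : Type*} [Group G] [TopologicalSpace G]
    [TopologicalSpace Y] [MulAction G Y] [ContinuousSMul G Y] {O : Set Y} (hO : IsOpen O)
    {g₀ : G} {y : Y} (hy : g₀ • y ∈ O) : {u : G | g₀ • u • y ∈ O} ∈ 𝓝 (1 : G) := by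
  have hcont : Continuous fun u : G => g₀ • u • y := by fun_prop
  exact hcont.continuousAt.preimage_mem_nhds (hO.mem_nhds (by simpa using hy))

theorem stmt10_general {G Y : Type*} [Group G] [TopologicalSpace G]
    [TopologicalSpace Y] [MulAction G Y] [ContinuousSMul G Y]
    (h : C(Y, ℝ))
    (hfrag : ∀ B : Set Y, B.Nonempty → ∀ ε > (0 : ℝ), ∃ O : Set Y, IsOpen O ∧
      (B ∩ O).Nonempty ∧
      ∀ g : G, ∀ y ∈ B ∩ O, ∀ y' ∈ B ∩ O, |h (g • y) - h (g • y')| < ε) :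
    ∀ y : Y, ∀ ε > (0 : ℝ), ∃ U ∈ 𝓝 (1 : G), ∀ g : G, ∀ u ∈ U,
      |h (g • y) - h (g • (u • y))| < ε := by
  intro y ε hε
  obtain ⟨O, hO, ⟨_, ⟨g₀, rfl⟩, hg₀O⟩, hosc⟩ :=
    hfrag (MulAction.orbit G y) (MulAction.nonempty_orbit y) ε hε
  refine ⟨_, setOf_smul_smul_mem_mem_nhds_one hO hg₀O, fun g u hu => ?_⟩
  have hy : g₀ • y ∈ MulAction.orbit G y ∩ O := ⟨MulAction.mem_orbit y g₀, hg₀O⟩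
  have huy : g₀ • u • y ∈ MulAction.orbit G y ∩ O := ⟨by simp [smul_smul], hu⟩
  simpa [smul_smul] using hosc (g * g₀⁻¹) _ hy _ huy

theorem stmt10 {G Y : Type*} [Group G] [TopologicalSpace G] [IsTopologicalGroup G]
    [TopologicalSpace Y] [CompactSpace Y] [T2Space Y] [MulAction G Y] [ContinuousSMul G Y]
    (h : C(Y, ℝ))
    (hfrag : ∀ B : Set Y, B.Nonempty → ∀ ε > (0 : ℝ), ∃ O : Set Y, IsOpen O ∧
      (B ∩ O).Nonempty ∧
      ∀ g : G, ∀ y ∈ B ∩ O, ∀ y' ∈ B ∩ O, |h (g • y) - h (g • y')| < ε) :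
    ∀ y : Y, ∀ ε > (0 : ℝ), ∃ U ∈ 𝓝 (1 : G), ∀ g : G, ∀ u ∈ U,
      |h (g • y) - h (g • (u • y))| < ε :=
  stmt10_general h hfrag
end

section
/- The family SUC(X) of strongly uniformly continuous functions on a compact G-space X forms a uniformly closed G-invariant subalgebra of C(X). -/
/-!
`h` is SUC exactly when, for every `x`, the functions `g ↦ h (g • u • x)` converge to
`g ↦ h (g • x)` uniformly in `g` as `u → 1`. Uniform convergence is preserved by applying a
continuous `φ : ℝ → ℝ → ℝ`, which is uniformly continuous on the compact set
`range f ×ˢ range h` containing all values; this gives sums and products. Translating `h` by `g`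
only reindexes the family, and an `ε/3` argument shows that uniform limits of SUC functions are SUC.
-/

open Filter Topology

/-- `h` is strongly uniformly continuous for the action of `G` on the compact space `X`. -/
def SUC (G : Type*) {X : Type*} [Group G] [TopologicalSpace G] [TopologicalSpace X]
    [MulAction G X] (h : C(X, ℝ)) : Prop :=
  ∀ x : X, ∀ ε > (0 : ℝ), ∃ U ∈ 𝓝 (1 : G), ∀ g : G, ∀ u ∈ U,
    |h (g • x) - h (g • (u • x))| < ε

namespace SUC

variable {G X : Type*} [Group G] [TopologicalSpace G] [TopologicalSpace X] [MulAction G X]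

theorem iff_tendstoUniformly {h : C(X, ℝ)} :
    SUC G h ↔ ∀ x : X,
      TendstoUniformly (fun (u g : G) => h (g • u • x)) (fun g => h (g • x)) (𝓝 1) := by
  simp only [Metric.tendstoUniformly_iff, Real.dist_eq, eventually_iff_exists_mem]
  exact forall_congr' fun x => forall₂_congr fun ε _ => exists_congr fun U =>
    and_congr_right fun _ => ⟨fun H u hu g => H g u hu, fun H g u hu => H u hu g⟩

theorem const (c : ℝ) : SUC G (ContinuousMap.const X c) :=
  fun _ ε hε => ⟨Set.univ, univ_mem, fun _ _ _ => by simpa using hε⟩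

theorem map₂ [CompactSpace X] {f h k : C(X, ℝ)} (hf : SUC G f) (hh : SUC G h)
    {φ : ℝ → ℝ → ℝ} (hφ : Continuous (Function.uncurry φ)) (hk : ∀ x, k x = φ (f x) (h x)) :
    SUC G k := by
  rw [iff_tendstoUniformly] at hf hh ⊢
  intro x
  have hK := (isCompact_range f.continuous).prod (isCompact_range h.continuous)
  have hpair := ((hK.uniformContinuousOn_of_continuous hφ.continuousOn).comp_tendstoUniformly
    (fun _ _ => Set.mk_mem_prod (Set.mem_range_self _) (Set.mem_range_self _))
    (fun _ => Set.mk_mem_prod (Set.mem_range_self _) (Set.mem_range_self _))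
    ((hf x).prodMk (hh x)))
  simp only [hk]
  -- `prodMk` converges along `𝓝 1 ×ˢ 𝓝 1`; restrict to the diagonal
  exact fun U hU => (hpair U hU).diag_of_prod

theorem add [CompactSpace X] {f h : C(X, ℝ)} (hf : SUC G f) (hh : SUC G h) : SUC G (f + h) :=
  hf.map₂ hh continuous_add fun _ => rfl

theorem mul [CompactSpace X] {f h : C(X, ℝ)} (hf : SUC G f) (hh : SUC G h) : SUC G (f * h) :=
  hf.map₂ hh continuous_mul fun _ => rfl

theorem comp_smul {h h' : C(X, ℝ)} (hh : SUC G h) (g : G) (hh' : ∀ x, h' x = h (g • x)) :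
    SUC G h' := by
  intro x ε hε
  obtain ⟨U, hU, hUh⟩ := hh x ε hε
  refine ⟨U, hU, fun g₀ u hu => ?_⟩
  simpa only [hh', smul_smul, mul_assoc] using hUh (g * g₀) u hu

theorem isClosed_setOf [CompactSpace X] : IsClosed {h : C(X, ℝ) | SUC G h} := by
  refine isClosed_of_closure_subset fun h hh x ε hε => ?_
  obtain ⟨f, hf, hfh⟩ := Metric.mem_closure_iff.mp hh (ε / 3) (by positivity)
  obtain ⟨U, hU, hUf⟩ := hf x (ε / 3) (by positivity)
  refine ⟨U, hU, fun g u hu => ?_⟩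
  rw [← Real.dist_eq]
  calc dist (h (g • x)) (h (g • u • x))
      ≤ dist (h (g • x)) (f (g • x)) + dist (f (g • x)) (f (g • u • x))
          + dist (f (g • u • x)) (h (g • u • x)) := dist_triangle4 _ _ _ _
    _ < ε / 3 + ε / 3 + ε / 3 := by
        gcongr
        · exact (ContinuousMap.dist_apply_le_dist _).trans_lt hfh
        · exact Real.dist_eq _ _ ▸ hUf g u hu
        · exact (ContinuousMap.dist_apply_le_dist _).trans_lt (dist_comm h f ▸ hfh)
    _ = ε := by ring

end SUC

theorem stmt11_general {G X : Type*} [Group G] [TopologicalSpace G]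
    [TopologicalSpace X] [CompactSpace X] [MulAction G X] :
    (∀ c : ℝ, SUC G (ContinuousMap.const X c)) ∧
    (∀ f h : C(X, ℝ), SUC G f → SUC G h → SUC G (f + h)) ∧
    (∀ f h : C(X, ℝ), SUC G f → SUC G h → SUC G (f * h)) ∧
    (∀ h : C(X, ℝ), SUC G h → ∀ g : G, ∀ h' : C(X, ℝ),
      (∀ x, h' x = h (g⁻¹ • x)) → SUC G h') ∧
    IsClosed {h : C(X, ℝ) | SUC G h} :=
  ⟨SUC.const, fun _ _ => SUC.add, fun _ _ => SUC.mul,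
    fun _ hh g _ => hh.comp_smul g⁻¹, SUC.isClosed_setOf⟩

theorem stmt11 {G X : Type*} [Group G] [TopologicalSpace G] [IsTopologicalGroup G]
    [TopologicalSpace X] [CompactSpace X] [T2Space X] [MulAction G X] [ContinuousSMul G X] :
    (∀ c : ℝ, SUC G (ContinuousMap.const X c)) ∧
    (∀ f h : C(X, ℝ), SUC G f → SUC G h → SUC G (f + h)) ∧
    (∀ f h : C(X, ℝ), SUC G f → SUC G h → SUC G (f * h)) ∧
    (∀ h : C(X, ℝ), SUC G h → ∀ g : G, ∀ h' : C(X, ℝ),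
      (∀ x, h' x = h (g⁻¹ • x)) → SUC G h') ∧
    IsClosed {h : C(X, ℝ) | SUC G h} :=
  stmt11_general
end

section
/- Witnessing non-NIP for the Urysohn sphere: let a, b, b' be finite tuples in a metric space of diameter ≤ 1 with a = a', b ≅ b' as metric spaces, ε > 0, such that d(a_n,a_m) ≤ d(a_n,b_k)+d(b_k,a_m) − ε and d(b_n,b_m) ≤ d(b_n,a_k)+d(a_k,b_m) − ε for all indices (same for b'), and |d(a_n,b_m) − d(a_n,b'_m)| ≤ ε/2 for all n,m. Then the following defines a metric space: copies (aⁱ)_{i<ω} of a and (b^I)_{I⊆ω} of b with a^i b^I ≅ a b if i ∈ I, a^i b^I ≅ a b' if i ∉ I, and for i ≠ j, I ≠ J: d(aⁱ_n, aʲ_m) = min(d(a_n,a_m)+ε/2, 1), d(b^I_n, b^J_m) = min(d(b_n,b_m)+ε/2, 1). -/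
set_option maxHeartbeats 2000000


open scoped Classical

theorem stmt19 {M : Type*} [MetricSpace M] (hdiam : ∀ p q : M, dist p q ≤ 1)
    {k l : ℕ} (a : Fin k → M) (b b' : Fin l → M) (ε : ℝ) (hε0 : 0 < ε) (hε1 : ε < 1)
    (hbb' : ∀ n m : Fin l, dist (b n) (b m) = dist (b' n) (b' m))
    (hsep1 : ∀ (n m : Fin k) (j : Fin l),
      dist (a n) (a m) ≤ dist (a n) (b j) + dist (b j) (a m) - ε)
    (hsep2 : ∀ (n m : Fin l) (i : Fin k),
      dist (b n) (b m) ≤ dist (b n) (a i) + dist (a i) (b m) - ε)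
    (hsep1' : ∀ (n m : Fin k) (j : Fin l),
      dist (a n) (a m) ≤ dist (a n) (b' j) + dist (b' j) (a m) - ε)
    (hsep2' : ∀ (n m : Fin l) (i : Fin k),
      dist (b' n) (b' m) ≤ dist (b' n) (a i) + dist (a i) (b' m) - ε)
    (hclose : ∀ (n : Fin k) (m : Fin l), |dist (a n) (b m) - dist (a n) (b' m)| ≤ ε / 2)
    (D : ((ℕ × Fin k) ⊕ (Set ℕ × Fin l)) → ((ℕ × Fin k) ⊕ (Set ℕ × Fin l)) → ℝ)
    (hD1 : ∀ (i j : ℕ) (n m : Fin k), D (Sum.inl (i, n)) (Sum.inl (j, m)) =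
      if i = j then dist (a n) (a m) else min (dist (a n) (a m) + ε / 2) 1)
    (hD2 : ∀ (I J : Set ℕ) (n m : Fin l), D (Sum.inr (I, n)) (Sum.inr (J, m)) =
      if I = J then dist (b n) (b m) else min (dist (b n) (b m) + ε / 2) 1)
    (hD3 : ∀ (i : ℕ) (I : Set ℕ) (n : Fin k) (m : Fin l), D (Sum.inl (i, n)) (Sum.inr (I, m)) =
      if i ∈ I then dist (a n) (b m) else dist (a n) (b' m))
    (hD4 : ∀ (i : ℕ) (I : Set ℕ) (n : Fin k) (m : Fin l), D (Sum.inr (I, m)) (Sum.inl (i, n)) =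
      if i ∈ I then dist (a n) (b m) else dist (a n) (b' m)) :
    (∀ p q, D p q = D q p) ∧ (∀ p, D p p = 0) ∧
    (∀ p q r, D p r ≤ D p q + D q r) := by

  have hε2 : (0:ℝ) < ε/2 := by linarith
  refine ⟨?_, ?_, ?_⟩
  · intro p q
    rcases p with ⟨i,n⟩|⟨I,n⟩ <;> rcases q with ⟨j,m⟩|⟨J,m⟩
    · rw [hD1, hD1]
      rcases eq_or_ne i j with rfl|h
      · simp [dist_comm]
      · simp [h, h.symm, dist_comm]
    · rw [hD3, hD4]
    · rw [hD4, hD3]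
    · rw [hD2, hD2]
      rcases eq_or_ne I J with rfl|h
      · simp [dist_comm]
      · simp [h, h.symm, dist_comm]
  · intro p
    rcases p with ⟨i,n⟩|⟨I,n⟩
    · simp [hD1]
    · simp [hD2]
  · intro p q r
    rcases p with ⟨i,n⟩|⟨I,n⟩ <;> rcases q with ⟨j,m⟩|⟨J,m⟩ <;> rcases r with ⟨w,p⟩|⟨W,p⟩
    · -- AAA
      simp only [hD1, min_def]
      split_ifs <;>
        first
        | omega
        | linarith [dist_triangle (a n) (a m) (a p), dist_comm (a n) (a m),
            dist_comm (a m) (a p), dist_comm (a n) (a p), hdiam (a n) (a p),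
            hdiam (a n) (a m), hdiam (a m) (a p),
            dist_nonneg (x := a n) (y := a m), dist_nonneg (x := a m) (y := a p),
            dist_nonneg (x := a n) (y := a p)]
        | simp_all
    · -- AAB
      simp only [hD1, hD3, min_def]
      split_ifs <;>
        first
        | omega
        | linarith [dist_triangle (a n) (a m) (b p), dist_triangle (a m) (a n) (b p),
            dist_triangle (a n) (a m) (b' p), dist_triangle (a m) (a n) (b' p),
            dist_comm (a n) (a m),
            (abs_le.mp (hclose n p)).1, (abs_le.mp (hclose n p)).2,
            (abs_le.mp (hclose m p)).1, (abs_le.mp (hclose m p)).2,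
            hdiam (a n) (b p), hdiam (a n) (b' p), hdiam (a m) (b p), hdiam (a m) (b' p),
            hdiam (a n) (a m),
            dist_nonneg (x := a n) (y := a m), dist_nonneg (x := a m) (y := b p),
            dist_nonneg (x := a m) (y := b' p), dist_nonneg (x := a n) (y := b p),
            dist_nonneg (x := a n) (y := b' p)]
        | simp_all
    · -- ABA
      simp only [hD1, hD3, hD4, min_def]
      split_ifs <;>
        first
        | omega
        | linarith [hsep1 n p m, hsep1' n p m,
            dist_triangle (a n) (b m) (a p), dist_triangle (a n) (b' m) (a p),
            dist_comm (b m) (a p), dist_comm (b' m) (a p),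
            (abs_le.mp (hclose n m)).1, (abs_le.mp (hclose n m)).2,
            (abs_le.mp (hclose p m)).1, (abs_le.mp (hclose p m)).2,
            hdiam (a n) (a p), hdiam (a n) (b m), hdiam (a n) (b' m),
            hdiam (a p) (b m), hdiam (a p) (b' m),
            dist_nonneg (x := a n) (y := a p), dist_nonneg (x := a n) (y := b m),
            dist_nonneg (x := a n) (y := b' m), dist_nonneg (x := a p) (y := b m),
            dist_nonneg (x := a p) (y := b' m)]
        | simp_all
    · -- ABB
      simp only [hD2, hD3, min_def]
      split_ifs <;>
        first
        | omega
        | linarith [dist_triangle (a n) (b m) (b p), dist_triangle (a n) (b' m) (b' p),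
            hbb' m p,
            (abs_le.mp (hclose n m)).1, (abs_le.mp (hclose n m)).2,
            (abs_le.mp (hclose n p)).1, (abs_le.mp (hclose n p)).2,
            hdiam (a n) (b m), hdiam (a n) (b' m), hdiam (a n) (b p), hdiam (a n) (b' p),
            hdiam (b m) (b p),
            dist_nonneg (x := a n) (y := b m), dist_nonneg (x := a n) (y := b' m),
            dist_nonneg (x := a n) (y := b p), dist_nonneg (x := a n) (y := b' p),
            dist_nonneg (x := b m) (y := b p)]
        | simp_all
    · -- BAA
      simp only [hD1, hD4, min_def]
      split_ifs <;>
        first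
        | omega
        | linarith [dist_triangle (a p) (a m) (b n), dist_triangle (a m) (a p) (b n),
            dist_triangle (a p) (a m) (b' n), dist_triangle (a m) (a p) (b' n),
            dist_comm (a m) (a p),
            (abs_le.mp (hclose p n)).1, (abs_le.mp (hclose p n)).2,
            (abs_le.mp (hclose m n)).1, (abs_le.mp (hclose m n)).2,
            hdiam (a p) (b n), hdiam (a p) (b' n), hdiam (a m) (b n), hdiam (a m) (b' n),
            hdiam (a m) (a p),
            dist_nonneg (x := a m) (y := a p), dist_nonneg (x := a m) (y := b n),
            dist_nonneg (x := a m) (y := b' n), dist_nonneg (x := a p) (y := b n),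
            dist_nonneg (x := a p) (y := b' n)]
        | simp_all
    · -- BAB
      simp only [hD2, hD3, hD4, min_def]
      split_ifs <;>
        first
        | omega
        | linarith [hsep2 n p m, hsep2' n p m, hbb' n p,
            dist_triangle (b n) (a m) (b p), dist_triangle (b' n) (a m) (b' p),
            dist_comm (b n) (a m), dist_comm (b' n) (a m),
            (abs_le.mp (hclose m n)).1, (abs_le.mp (hclose m n)).2,
            (abs_le.mp (hclose m p)).1, (abs_le.mp (hclose m p)).2,
            hdiam (b n) (b p), hdiam (a m) (b n), hdiam (a m) (b' n),
            hdiam (a m) (b p), hdiam (a m) (b' p),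
            dist_nonneg (x := b n) (y := b p), dist_nonneg (x := a m) (y := b n),
            dist_nonneg (x := a m) (y := b' n), dist_nonneg (x := a m) (y := b p),
            dist_nonneg (x := a m) (y := b' p)]
        | simp_all
    · -- BBA
      simp only [hD2, hD4, min_def]
      split_ifs <;>
        first
        | omega
        | linarith [dist_triangle (a p) (b m) (b n), dist_triangle (a p) (b' m) (b' n),
            hbb' n m, dist_comm (b n) (b m), dist_comm (b' n) (b' m),
            dist_comm (b m) (b n), dist_comm (b' m) (b' n),
            (abs_le.mp (hclose p n)).1, (abs_le.mp (hclose p n)).2,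
            (abs_le.mp (hclose p m)).1, (abs_le.mp (hclose p m)).2,
            hdiam (a p) (b n), hdiam (a p) (b' n), hdiam (a p) (b m), hdiam (a p) (b' m),
            hdiam (b n) (b m),
            dist_nonneg (x := a p) (y := b n), dist_nonneg (x := a p) (y := b' n),
            dist_nonneg (x := a p) (y := b m), dist_nonneg (x := a p) (y := b' m),
            dist_nonneg (x := b n) (y := b m)]
        | simp_all
    · -- BBB
      simp only [hD2, min_def]
      split_ifs <;>
        first
        | omega
        | linarith [dist_triangle (b n) (b m) (b p), dist_comm (b n) (b m),
            dist_comm (b m) (b p), dist_comm (b n) (b p), hdiam (b n) (b p),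
            hdiam (b n) (b m), hdiam (b m) (b p),
            dist_nonneg (x := b n) (y := b m), dist_nonneg (x := b m) (y := b p),
            dist_nonneg (x := b n) (y := b p)]
        | simp_all
end
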